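/- arXiv:math/0607352 — 2 statements merged into one kernel-verified Lean document; each statement's English description precedes it below -/
import Mathlib

section
/- Let G and H be locally finite simple graphs and let α be a locally constant H-labeling of G such that val(h) = n ≥ 1 for every h in the image of α. Suppose f̂ ∈ ℓ²(V(G⋈_α H)) is nonzero and satisfies Σ_{(v,j) ∼ (u,i)} f̂(v,j) = λ f̂(u,i) for every vertex (u,i) of G⋈_α H, with λ ≠ 0. Then f̂(u,i) depends only on u, and there exists a nonzero f ∈ ℓ²(V(G)) with f(u) = f̂(u,i) whenever (u,i) ∈ V(G⋈_α H), satisfying Σ_{u ∼ v} f(u) = (λ/n) f(v) for every vertex v of G; that is, λ/n is an eigenvalue of the adjacency operator of G. -/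
open Finset Filter

open scoped Classical

universe u v

variable {V : Type u} {W : Type v}

/-- The generalized zig-zag product of an `H`-labeled graph `(G, α)` with `H`.
The labeling `α : D(G) → V(H)` is encoded as `α : V → V → W`, where for adjacent
vertices `u, v` the value `α u v` represents `α(u, {u,v})`. -/
def zigzag (G : SimpleGraph V) (H : SimpleGraph W) (α : V → V → W) :
    SimpleGraph (V × W) where
  Adj p q := G.Adj p.1 q.1 ∧ H.Adj (α p.1 q.1) p.2 ∧ H.Adj (α q.1 p.1) q.2
  symm := ⟨fun _ _ h => ⟨h.1.symm, h.2.2, h.2.1⟩⟩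
  loopless := ⟨fun p h => G.loopless.irrefl p.1 h.1⟩

/-- The vertex set of the zig-zag product `G ⋈_α H`:
pairs `(u, i)` such that some edge `e` of `G` is incident to `u` with `i`
adjacent to `α(u, e)` in `H`. -/
def zigzagVerts (G : SimpleGraph V) (H : SimpleGraph W) (α : V → V → W) :
    Set (V × W) :=
  {p | ∃ w, G.Adj p.1 w ∧ H.Adj (α p.1 w) p.2}

/-!
Local constancy of `α` makes the neighbourhood of `(u, i)` in `G ⋈_α H` independent of `i`: it
consists of the pairs `(v, j)` with `v ∼ u` in `G` and `j ∼ α(v, u)` in `H`. Hence the eigenvalue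
equation at `(u, i)` has a right-hand side independent of `i`, and `λ ≠ 0` forces `f̂` to be
constant on fibres. Writing `f` for the induced function on `V(G)`, each neighbour `v` of `u`
contributes `val(α(v, u)) · f(v) = n · f(v)`, so `n · (A f)(u) = λ f(u)`. Vertices with an empty
fibre are isolated in `G` because `n ≥ 1`, and there `f = 0`.
-/

section Zigzag

variable {G : SimpleGraph V} {H : SimpleGraph W} {α : V → V → W}

theorem exists_mem_zigzagVerts_of_adj {x w : V} [Fintype (H.neighborSet (α x w))]
    (hxw : G.Adj x w) (hdeg : 0 < H.degree (α x w)) : ∃ i, (x, i) ∈ zigzagVerts G H α := by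
  obtain ⟨i, hi⟩ := (H.degree_pos_iff_exists_adj _).mp hdeg
  exact ⟨i, w, hxw, hi⟩

variable (G H α) in
noncomputable def zigzagDescend {M : Type*} [Zero M] (fh : V × W → M) (x : V) : M :=
  if h : ∃ i, (x, i) ∈ zigzagVerts G H α then fh (x, h.choose) else 0

theorem zigzagDescend_of_exists {M : Type*} [Zero M] {fh : V × W → M} {x : V}
    (hx : ∃ i, (x, i) ∈ zigzagVerts G H α) : zigzagDescend G H α fh x = fh (x, hx.choose) :=
  dif_pos hx

theorem zigzagDescend_eq_zero {M : Type*} [Zero M] {fh : V × W → M} {x : V}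
    (hx : ¬∃ i, (x, i) ∈ zigzagVerts G H α) : zigzagDescend G H α fh x = 0 :=
  dif_neg hx

theorem zigzagDescend_eq {M : Type*} [Zero M] {fh : V × W → M}
    (hconst : ∀ (u : V) (i j : W), (u, i) ∈ zigzagVerts G H α → (u, j) ∈ zigzagVerts G H α →
      fh (u, i) = fh (u, j))
    {u : V} {i : W} (hi : (u, i) ∈ zigzagVerts G H α) : zigzagDescend G H α fh u = fh (u, i) := by
  have hu : ∃ i, (u, i) ∈ zigzagVerts G H α := ⟨i, hi⟩
  rw [zigzagDescend_of_exists hu]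
  exact hconst u _ i hu.choose_spec hi

theorem summable_norm_sq_zigzagDescend {E : Type*} [NormedAddCommGroup E] {fh : V × W → E}
    (hf2 : Summable fun p : zigzagVerts G H α => ‖fh p‖ ^ 2) :
    Summable fun x => ‖zigzagDescend G H α fh x‖ ^ 2 := by
  let S := {x : V | ∃ i, (x, i) ∈ zigzagVerts G H α}
  have hlift : Function.Injective fun x : S =>
      (⟨(x.1, x.2.choose), x.2.choose_spec⟩ : zigzagVerts G H α) :=
    fun a b hab => Subtype.ext (congrArg (fun p => p.1.1) hab)
  refine ((Subtype.val_injective (p := (· ∈ S))).summable_iff fun x hx => ?_).mp ?_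
  · rw [zigzagDescend_eq_zero fun ⟨i, hi⟩ => hx ⟨⟨x, i, hi⟩, rfl⟩, norm_zero, sq, zero_mul]
  · refine (hf2.comp_injective hlift).congr fun x => ?_
    simp only [Function.comp_apply, zigzagDescend_of_exists x.2]

theorem zigzag_adj_iff_of_mem (hlc : ∀ x y z : V, G.Adj x y → G.Adj x z → α x y = α x z)
    {u : V} {i : W} (hi : (u, i) ∈ zigzagVerts G H α) {q : V × W} :
    (zigzag G H α).Adj (u, i) q ↔ G.Adj u q.1 ∧ H.Adj (α q.1 u) q.2 := by
  obtain ⟨w, huw, hwi⟩ := hi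
  exact ⟨fun h => ⟨h.1, h.2.2⟩, fun h => ⟨h.1, hlc u q.1 w h.1 huw ▸ hwi, h.2⟩⟩

variable [∀ x, Fintype (G.neighborSet x)] [∀ h, Fintype (H.neighborSet h)]
  [∀ p, Fintype ((zigzag G H α).neighborSet p)]

theorem sum_zigzag_neighborFinset {M : Type*} [AddCommMonoid M]
    (hlc : ∀ x y z : V, G.Adj x y → G.Adj x z → α x y = α x z)
    {u : V} {i : W} (hi : (u, i) ∈ zigzagVerts G H α) (g : V × W → M) :
    ∑ q ∈ (zigzag G H α).neighborFinset (u, i), g q =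
      ∑ v ∈ G.neighborFinset u, ∑ j ∈ H.neighborFinset (α v u), g (v, j) :=
  sum_finset_product _ _ _ fun q => by
    simp only [SimpleGraph.mem_neighborFinset, zigzag_adj_iff_of_mem hlc hi]

theorem zigzag_eigenfunction_eq_of_fst_eq {K : Type*} [Semiring K] [IsLeftCancelMulZero K]
    (hlc : ∀ x y z : V, G.Adj x y → G.Adj x z → α x y = α x z)
    {fh : V × W → K} {lam : K} (hlam : lam ≠ 0)
    (heig : ∀ p ∈ zigzagVerts G H α,
      ∑ q ∈ (zigzag G H α).neighborFinset p, fh q = lam * fh p)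
    (u : V) (i j : W) (hi : (u, i) ∈ zigzagVerts G H α) (hj : (u, j) ∈ zigzagVerts G H α) :
    fh (u, i) = fh (u, j) := by
  refine mul_left_cancel₀ hlam ?_
  rw [← heig _ hi, ← heig _ hj, sum_zigzag_neighborFinset hlc hi, sum_zigzag_neighborFinset hlc hj]

theorem natCast_mul_sum_zigzagDescend {K : Type*} [Semiring K]
    (hlc : ∀ x y z : V, G.Adj x y → G.Adj x z → α x y = α x z)
    {n : ℕ} (hval : ∀ x y : V, G.Adj x y → H.degree (α x y) = n)
    {fh : V × W → K} {lam : K}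
    (hconst : ∀ (u : V) (i j : W), (u, i) ∈ zigzagVerts G H α → (u, j) ∈ zigzagVerts G H α →
      fh (u, i) = fh (u, j))
    (heig : ∀ p ∈ zigzagVerts G H α,
      ∑ q ∈ (zigzag G H α).neighborFinset p, fh q = lam * fh p)
    {x : V} {i : W} (hi : (x, i) ∈ zigzagVerts G H α) :
    (n : K) * ∑ y ∈ G.neighborFinset x, zigzagDescend G H α fh y =
      lam * zigzagDescend G H α fh x := by
  have hfibre : ∀ y ∈ G.neighborFinset x,
      ∑ j ∈ H.neighborFinset (α y x), fh (y, j) = n * zigzagDescend G H α fh y := by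
    intro y hy
    have hxy := (G.mem_neighborFinset x y).mp hy
    rw [sum_congr rfl fun j hj => (zigzagDescend_eq hconst
      ⟨x, hxy.symm, (H.mem_neighborFinset _ j).mp hj⟩).symm, sum_const,
      SimpleGraph.card_neighborFinset_eq_degree, hval y x hxy.symm, nsmul_eq_mul]
  calc (n : K) * ∑ y ∈ G.neighborFinset x, zigzagDescend G H α fh y
      = ∑ q ∈ (zigzag G H α).neighborFinset (x, i), fh q := by
        rw [mul_sum, sum_zigzag_neighborFinset hlc hi, sum_congr rfl hfibre]
    _ = lam * zigzagDescend G H α fh x := by rw [heig _ hi, zigzagDescend_eq hconst hi]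

end Zigzag

/-- For locally finite `G`, `H` and a locally constant `H`-labeling `α`
with `val(h) = n ≥ 1` on the image of `α`: if a nonzero `f̂ ∈ ℓ²(V(G ⋈_α H))` satisfies
`Σ_{(v,j) ∼ (u,i)} f̂(v,j) = λ f̂(u,i)` with `λ ≠ 0`, then `f̂(u,i)` depends only on `u`,
and there is a nonzero `f ∈ ℓ²(V(G))` with `f u = f̂(u,i)` whenever `(u,i)` is a vertex
of `G ⋈_α H`, satisfying `Σ_{u ∼ v} f u = (λ/n) f v` for every `v`; that is, `λ/n` is
an eigenvalue of the adjacency operator of `G`. -/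
theorem zigzag_eigenfunction_descend (G : SimpleGraph V) (H : SimpleGraph W) (α : V → V → W)
    [∀ x : V, Fintype (G.neighborSet x)] [∀ h : W, Fintype (H.neighborSet h)]
    [∀ p : V × W, Fintype ((zigzag G H α).neighborSet p)]
    (hlc : ∀ x y z : V, G.Adj x y → G.Adj x z → α x y = α x z)
    (n : ℕ) (hn : 1 ≤ n)
    (hval : ∀ x y : V, G.Adj x y → H.degree (α x y) = n)
    (fh : V × W → ℂ)
    (hf2 : Summable fun p : ↥(zigzagVerts G H α) => ‖fh p‖ ^ 2)
    (hfne : ∃ p ∈ zigzagVerts G H α, fh p ≠ 0)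
    (lam : ℂ) (hlam : lam ≠ 0)
    (heig : ∀ p ∈ zigzagVerts G H α,
      ∑ q ∈ (zigzag G H α).neighborFinset p, fh q = lam * fh p) :
    (∀ (u : V) (i j : W), (u, i) ∈ zigzagVerts G H α → (u, j) ∈ zigzagVerts G H α →
      fh (u, i) = fh (u, j)) ∧
    ∃ f : V → ℂ, Summable (fun x : V => ‖f x‖ ^ 2) ∧ f ≠ 0 ∧
      (∀ (u : V) (i : W), (u, i) ∈ zigzagVerts G H α → f u = fh (u, i)) ∧
      ∀ x : V, ∑ y ∈ G.neighborFinset x, f y = (lam / (n : ℂ)) * f x := by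
  have hconst := zigzag_eigenfunction_eq_of_fst_eq hlc hlam heig
  refine ⟨hconst, zigzagDescend G H α fh, summable_norm_sq_zigzagDescend hf2, ?_,
    fun u i hi => zigzagDescend_eq hconst hi, fun x => ?_⟩
  · obtain ⟨p, hp, hfp⟩ := hfne
    exact fun h => hfp (by rw [← zigzagDescend_eq hconst hp, h, Pi.zero_apply])
  by_cases hx : ∃ i, (x, i) ∈ zigzagVerts G H α
  · obtain ⟨i, hi⟩ := hx
    rw [div_mul_eq_mul_div, eq_div_iff (Nat.cast_ne_zero.mpr (Nat.one_le_iff_ne_zero.mp hn)),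
      mul_comm]
    exact natCast_mul_sum_zigzagDescend hlc hval hconst heig hi
  · have hisolated : G.neighborFinset x = ∅ := eq_empty_of_forall_notMem fun w hw => by
      have hxw := (G.mem_neighborFinset x w).mp hw
      exact hx (exists_mem_zigzagVerts_of_adj hxw ((hval x w hxw).symm ▸ hn))
    rw [hisolated, sum_empty, zigzagDescend_eq_zero hx, mul_zero]
end

section
/- Let G be an m-regular simple graph with m ≥ 1, let H be a d-regular simple graph on m vertices with d ≥ 1, and let α be an H-labeling of G such that for each vertex u of G the map e ↦ α(u,e) is a bijection from the set of edges incident to u onto V(H). If G is amenable, then G⋈_α H is amenable. -/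
/-!
Since each `α(u, ·)` is onto `V(H)` and `H` has no isolated vertex, every pair `(u, i)` is a
vertex of `G ⋈_α H`; and every edge of `G ⋈_α H` lies over an edge of `G`. So for a finite
`F ⊆ V(G)`, each edge in the boundary of `F × V(H)` lies over an edge of `∂F`, and over a
given edge of `G` there are at most `m²` edges. Hence
`|∂(F × V(H))| / |F × V(H)| ≤ m · |∂F| / |F|`, and a Følner sequence `F n` of `G` yields the
Følner sequence `F n × V(H)` of the product.
-/

open Finset Filter

open scoped Classical

universe u v

variable {V : Type u} {W : Type v}

/-- The edge boundary of a set `S` of vertices: edges of `G` with exactly one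
endpoint in `S`. -/
def edgeBoundary (G : SimpleGraph V) (S : Set V) : Set (Sym2 V) :=
  {e | e ∈ G.edgeSet ∧ ∃ x y, e = s(x, y) ∧ x ∈ S ∧ y ∉ S}


namespace SimpleGraph

variable (G : SimpleGraph V)

def directedBoundary (S : Set V) : Set (V × V) :=
  {p | G.Adj p.1 p.2 ∧ p.1 ∈ S ∧ p.2 ∉ S}

theorem ncard_edgeBoundary_eq (S : Set V) :
    (edgeBoundary G S).ncard = (G.directedBoundary S).ncard := by
  have himage : (fun p : V × V => s(p.1, p.2)) '' G.directedBoundary S = edgeBoundary G S := by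
    ext e
    constructor
    · rintro ⟨⟨u, v⟩, ⟨hadj, hu, hv⟩, rfl⟩
      exact ⟨hadj, u, v, rfl, hu, hv⟩
    · rintro ⟨he, u, v, rfl, hu, hv⟩
      exact ⟨(u, v), ⟨he, hu, hv⟩, rfl⟩
  have hinj : Set.InjOn (fun p : V × V => s(p.1, p.2)) (G.directedBoundary S) := by
    rintro _ ⟨-, hp, -⟩ _ ⟨-, -, hq⟩ hpq
    rcases Sym2.mk_eq_mk_iff.mp hpq with h | rfl
    · exact h
    · exact absurd hp hq
  rw [← himage, hinj.ncard_image]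

theorem directedBoundary_finite (hG : ∀ v, (G.neighborSet v).Finite) {S : Set V}
    (hS : S.Finite) : (G.directedBoundary S).Finite :=
  (hS.biUnion fun u _ => (Set.finite_singleton u).prod (hG u)).subset
    fun _ ⟨hadj, hp, _⟩ => Set.mem_biUnion hp ⟨rfl, hadj⟩

theorem ncard_edgeBoundary_prod_univ_le [Fintype W] {K : SimpleGraph (V × W)}
    (hK : ∀ p q, K.Adj p q → G.Adj p.1 q.1) (hG : ∀ v, (G.neighborSet v).Finite)
    {S : Set V} (hS : S.Finite) :
    (edgeBoundary K (S ×ˢ Set.univ)).ncard ≤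
      (edgeBoundary G S).ncard * Fintype.card W ^ 2 := by
  let e := Equiv.prodProdProdComm V W V W
  calc (edgeBoundary K (S ×ˢ Set.univ)).ncard
      = (K.directedBoundary (S ×ˢ Set.univ)).ncard := K.ncard_edgeBoundary_eq _
    _ ≤ (G.directedBoundary S ×ˢ (Set.univ : Set (W × W))).ncard := by
        refine Set.ncard_le_ncard_of_injOn e ?_ e.injective.injOn
          ((G.directedBoundary_finite hG hS).prod Set.finite_univ)
        rintro ⟨p, q⟩ ⟨hadj, hp, hq⟩
        exact ⟨⟨hK p q hadj, hp.1, fun h => hq ⟨h, trivial⟩⟩, trivial⟩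
    _ = (edgeBoundary G S).ncard * Fintype.card W ^ 2 := by
        rw [Set.ncard_prod, ← ncard_edgeBoundary_eq, Set.ncard_univ, Nat.card_eq_fintype_card,
          Fintype.card_prod, sq]

theorem edgeBoundary_ratio_prod_univ_le [Fintype W] {K : SimpleGraph (V × W)}
    (hK : ∀ p q, K.Adj p q → G.Adj p.1 q.1) (hG : ∀ v, (G.neighborSet v).Finite)
    (F : Finset V) :
    ((edgeBoundary K ↑(F ×ˢ (Finset.univ : Finset W))).ncard : ℝ) /
      (F ×ˢ (Finset.univ : Finset W)).card ≤
      Fintype.card W * ((edgeBoundary G ↑F).ncard / F.card) := by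
  have hbound := G.ncard_edgeBoundary_prod_univ_le hK hG F.finite_toSet
  rw [Finset.coe_product, Finset.coe_univ, Finset.card_product, Finset.card_univ]
  push_cast
  obtain hW | hW := eq_or_ne (Fintype.card W : ℝ) 0
  · simp [hW]
  calc _ ≤ ((edgeBoundary G ↑F).ncard * (Fintype.card W : ℝ) ^ 2) / (F.card * Fintype.card W) :=
        div_le_div_of_nonneg_right (by exact_mod_cast hbound) (by positivity)
    _ = Fintype.card W * ((edgeBoundary G ↑F).ncard / F.card) := by
        rw [mul_comm (F.card : ℝ), ← div_div, sq, ← mul_assoc, mul_div_cancel_right₀ _ hW,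
          mul_comm, mul_div_assoc]

end SimpleGraph

theorem zigzag_adj_fst {G : SimpleGraph V} {H : SimpleGraph W} {α : V → V → W}
    {p q : V × W} (h : (zigzag G H α).Adj p q) : G.Adj p.1 q.1 :=
  h.1

theorem zigzagVerts_eq_univ {G : SimpleGraph V} {H : SimpleGraph W}
    {α : V → V → W} (hH : ∀ i, (H.neighborSet i).Nonempty)
    (hα : ∀ u, Set.SurjOn (α u) {v | G.Adj u v} Set.univ) :
    zigzagVerts G H α = Set.univ := by
  refine Set.eq_univ_of_forall fun ⟨u, i⟩ => ?_
  obtain ⟨j, hij⟩ := hH i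
  obtain ⟨v, huv, rfl⟩ := hα u (Set.mem_univ j)
  exact ⟨v, huv, hij.symm⟩

theorem zigzag_amenable_general (G : SimpleGraph V) (H : SimpleGraph W) (α : V → V → W)
    [Fintype W]
    (m d : ℕ) (hm : 1 ≤ m) (hd : 1 ≤ d)
    (hWcard : Fintype.card W = m)
    (hHreg : ∀ h : W, (H.neighborSet h).ncard = d)
    (hbij : ∀ x : V, Set.BijOn (fun y => α x y) {y | G.Adj x y} Set.univ)
    (hGam : ∃ F : ℕ → Finset V, (∀ n, (F n).Nonempty) ∧ (∀ x : V, ∃ n, x ∈ F n) ∧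
      Tendsto (fun n => ((edgeBoundary G ↑(F n)).ncard : ℝ) / (F n).card) atTop (nhds 0)) :
    ∃ S : ℕ → Finset (V × W), (∀ n, (S n).Nonempty) ∧
      (∀ n, ↑(S n) ⊆ zigzagVerts G H α) ∧
      (∀ p ∈ zigzagVerts G H α, ∃ n, p ∈ S n) ∧
      Tendsto (fun n => ((edgeBoundary (zigzag G H α) ↑(S n)).ncard : ℝ) / (S n).card)
        atTop (nhds 0) := by
  obtain ⟨F, hFne, hFcov, hFlim⟩ := hGam
  have : Nonempty W := Fintype.card_pos_iff.mp (hWcard ▸ hm)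
  have hGfin : ∀ u, (G.neighborSet u).Finite := fun u =>
    Set.Finite.of_finite_image (Set.toFinite _) (hbij u).injOn
  have hHne : ∀ i, (H.neighborSet i).Nonempty := fun i =>
    Set.nonempty_of_ncard_ne_zero (by rw [hHreg i]; omega)
  have hverts := zigzagVerts_eq_univ hHne fun u => (hbij u).surjOn
  refine ⟨fun n => F n ×ˢ Finset.univ, fun n => (hFne n).product Finset.univ_nonempty,
    fun n => hverts ▸ Set.subset_univ _,
    fun p _ => (hFcov p.1).imp fun n hn => Finset.mem_product.mpr ⟨hn, Finset.mem_univ _⟩, ?_⟩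
  refine squeeze_zero (fun n => by positivity)
    (fun n => G.edgeBoundary_ratio_prod_univ_le (fun _ _ => zigzag_adj_fst) hGfin (F n)) ?_
  simpa using hFlim.const_mul (Fintype.card W : ℝ)

/-- With `G` `m`-regular (`m ≥ 1`), `H` `d`-regular on `m` vertices
(`d ≥ 1`), and `α(u,·)` bijections onto `V(H)`: if `G` is amenable (admits a Følner
sequence), then so is `G ⋈_α H`. -/
theorem zigzag_amenable (G : SimpleGraph V) (H : SimpleGraph W) (α : V → V → W)
    [Fintype W]
    (m d : ℕ) (hm : 1 ≤ m) (hd : 1 ≤ d)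
    (hGreg : ∀ x : V, (G.neighborSet x).ncard = m)
    (hWcard : Fintype.card W = m)
    (hHreg : ∀ h : W, (H.neighborSet h).ncard = d)
    (hbij : ∀ x : V, Set.BijOn (fun y => α x y) {y | G.Adj x y} Set.univ)
    (hGam : ∃ F : ℕ → Finset V, (∀ n, (F n).Nonempty) ∧ (∀ x : V, ∃ n, x ∈ F n) ∧
      Tendsto (fun n => ((edgeBoundary G ↑(F n)).ncard : ℝ) / (F n).card) atTop (nhds 0)) :
    ∃ S : ℕ → Finset (V × W), (∀ n, (S n).Nonempty) ∧
      (∀ n, ↑(S n) ⊆ zigzagVerts G H α) ∧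
      (∀ p ∈ zigzagVerts G H α, ∃ n, p ∈ S n) ∧
      Tendsto (fun n => ((edgeBoundary (zigzag G H α) ↑(S n)).ncard : ℝ) / (S n).card)
        atTop (nhds 0) :=
  zigzag_amenable_general G H α m d hm hd hWcard hHreg hbij hGam
end
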